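/- arXiv:2010.08345 — 6 statements merged into one kernel-verified Lean document; each statement's English description precedes it below -/
import Mathlib

section
/- Let $p$ be a prime and let $i, j$ be positive integers with base-$p$ expansions $i - 1 = \sum_{m \geq 0} i_m p^m$ and $j - 1 = \sum_{m \geq 0} j_m p^m$ (with digits $0 \leq i_m, j_m < p$). Let $q$ be the smallest nonnegative integer such that $i_m + j_m < p$ for all $m \geq q$, and set $d = p^q + \sum_{m \geq q}(i_m + j_m)p^m$. Then $i \wedge j = d$, where $i \wedge j$ is the maximum of $a+b+1$ over pairs $0 \leq a \leq i-1$, $0 \leq b \leq j-1$ with $p \nmid \binom{a+b}{a}$. -/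
/-- `wedge p u v` is the maximum of `a + b + 1` over `0 ≤ a ≤ u-1`, `0 ≤ b ≤ v-1`
with `p ∤ (a+b).choose a`, extended by `wedge p 0 v = wedge p u 0 = 0`. -/
def wedge (p u v : ℕ) : ℕ :=
  if u = 0 ∨ v = 0 then 0
  else ((Finset.range u ×ˢ Finset.range v).filter
      (fun ab => ¬ p ∣ Nat.choose (ab.1 + ab.2) ab.1)).sup
      (fun ab => ab.1 + ab.2 + 1)

/-- the `m`-th base-`p` digit of `n`. -/
def digit (p m n : ℕ) : ℕ := n / p ^ m % p

private lemma mod_mul'' (n P Q : ℕ) : n % (P * Q) = (n / P % Q) * P + n % P := by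
  conv_lhs => rw [← Nat.div_add_mod' (n % (P * Q)) P]
  rw [Nat.mod_mul_right_div_self, Nat.mod_mod_of_dvd _ ⟨Q, rfl⟩]

private lemma kummer {p : ℕ} (hp : p.Prime) (a b : ℕ) :
    ¬ p ∣ (a + b).choose a ↔ ∀ n, a % p ^ n + b % p ^ n < p ^ n := by
  haveI : Fact p.Prime := ⟨hp⟩
  have hC : (a + b).choose a ≠ 0 := (Nat.choose_pos (Nat.le_add_right a b)).ne'
  rw [Nat.Prime.dvd_iff_one_le_factorization hp hC, not_le, Nat.lt_one_iff,
    Nat.factorization_def _ hp, add_comm a b,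
    padicValNat_choose' (n := b) (k := a) (b := b + a + 1)
      (Nat.lt_succ_of_le (Nat.log_le_self _ _)),
    Finset.card_eq_zero, Finset.filter_eq_empty_iff]
  constructor
  · intro h n
    rcases Nat.eq_zero_or_pos n with rfl | hn
    · simp [Nat.mod_one]
    by_cases hn2 : n < b + a + 1
    · have := h (Finset.mem_Ico.mpr ⟨hn, hn2⟩)
      omega
    · have h1 : a % p ^ n + b % p ^ n ≤ a + b :=
        Nat.add_le_add (Nat.mod_le _ _) (Nat.mod_le _ _)
      have h2 : n < 2 ^ n := Nat.lt_two_pow_self (n := n)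
      have h3 : (2:ℕ) ^ n ≤ p ^ n := Nat.pow_le_pow_left hp.two_le n
      omega
  · intro h i _
    exact not_le.mpr (h i)

private lemma carry_of_digit {p : ℕ} (hp : 2 ≤ p) {x y : ℕ}
    (h : ∀ t, x / p ^ t % p + y / p ^ t % p < p) :
    ∀ k, x % p ^ k + y % p ^ k < p ^ k := by
  intro k
  induction k with
  | zero => simp [Nat.mod_one]
  | succ k ih =>
    have hx : x % p ^ (k + 1) = (x / p ^ k % p) * p ^ k + x % p ^ k := by
      rw [pow_succ]; exact mod_mul'' x (p ^ k) p
    have hy : y % p ^ (k + 1) = (y / p ^ k % p) * p ^ k + y % p ^ k := by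
      rw [pow_succ]; exact mod_mul'' y (p ^ k) p
    have hd := h k
    have e1 : (x / p ^ k % p + y / p ^ k % p) * p ^ k
        = (x / p ^ k % p) * p ^ k + (y / p ^ k % p) * p ^ k := add_mul _ _ _
    have e2 : (x / p ^ k % p + y / p ^ k % p) * p ^ k ≤ (p - 1) * p ^ k :=
      Nat.mul_le_mul_right _ (by omega)
    have e3 : (p - 1) * p ^ k + p ^ k = p ^ (k + 1) := by
      rw [pow_succ, Nat.sub_one_mul, mul_comm p (p ^ k)]
      have : p ^ k ≤ p ^ k * p := Nat.le_mul_of_pos_right _ (by omega)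
      omega
    rw [hx, hy]
    omega

private lemma sumdig {p : ℕ} (n q N : ℕ) (h : q ≤ N) :
    n % p ^ q + ∑ m ∈ Finset.Ico q N, (n / p ^ m % p) * p ^ m = n % p ^ N := by
  induction N, h using Nat.le_induction with
  | base => simp
  | succ N hN ih =>
    rw [Finset.sum_Ico_succ_top hN, ← add_assoc, ih, pow_succ, mod_mul'' n (p ^ N) p]
    exact add_comm _ _

theorem stmt_4 (p : ℕ) (hp : p.Prime) (i j : ℕ) (hi : 1 ≤ i) (hj : 1 ≤ j) (q : ℕ)
    (hq : ∀ m, q ≤ m → digit p m (i - 1) + digit p m (j - 1) < p)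
    (hqmin : ∀ q' < q, ∃ m, q' ≤ m ∧ ¬ digit p m (i - 1) + digit p m (j - 1) < p) :
    wedge p i j =
      p ^ q + ∑ m ∈ Finset.Ico q (i + j), (digit p m (i - 1) + digit p m (j - 1)) * p ^ m := by
  have hp2 := hp.two_le
  have hPpos : 0 < p ^ q := pow_pos (by omega) q
  simp only [digit] at hq hqmin ⊢
  set A := i - 1 with hAdef
  set B := j - 1 with hBdef
  have hApow : ∀ m, i + j ≤ m → A < p ^ m := by
    intro m hm
    have h2 : m < 2 ^ m := Nat.lt_two_pow_self (n := m)
    have h3 : (2:ℕ) ^ m ≤ p ^ m := Nat.pow_le_pow_left hp2 m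
    omega
  have hBpow : ∀ m, i + j ≤ m → B < p ^ m := by
    intro m hm
    have h2 : m < 2 ^ m := Nat.lt_two_pow_self (n := m)
    have h3 : (2:ℕ) ^ m ≤ p ^ m := Nat.pow_le_pow_left hp2 m
    omega
  have hqle : q ≤ i + j := by
    by_contra hc
    obtain ⟨m, hm1, hm2⟩ := hqmin (i + j) (by omega)
    rw [Nat.div_eq_of_lt (hApow m hm1), Nat.div_eq_of_lt (hBpow m hm1)] at hm2
    simp at hm2
    omega
  have hsA := sumdig (p := p) A q (i + j) hqle
  have hsB := sumdig (p := p) B q (i + j) hqle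
  rw [Nat.mod_eq_of_lt (hApow (i + j) le_rfl)] at hsA
  rw [Nat.mod_eq_of_lt (hBpow (i + j) le_rfl)] at hsB
  have dA := Nat.div_add_mod' A (p ^ q)
  have dB := Nat.div_add_mod' B (p ^ q)
  have hsum : ∑ m ∈ Finset.Ico q (i + j), (A / p ^ m % p + B / p ^ m % p) * p ^ m
      = A / p ^ q * p ^ q + B / p ^ q * p ^ q := by
    have e : ∑ m ∈ Finset.Ico q (i + j), (A / p ^ m % p + B / p ^ m % p) * p ^ m
        = (∑ m ∈ Finset.Ico q (i + j), (A / p ^ m % p) * p ^ m)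
          + ∑ m ∈ Finset.Ico q (i + j), (B / p ^ m % p) * p ^ m := by
      rw [← Finset.sum_add_distrib]
      exact Finset.sum_congr rfl fun m _ => add_mul _ _ _
    omega
  rw [hsum]
  unfold wedge
  rw [if_neg (by omega)]
  apply le_antisymm
  · apply Finset.sup_le
    intro ab hab
    simp only [Finset.mem_filter, Finset.mem_product, Finset.mem_range] at hab
    obtain ⟨⟨ha, hb⟩, hnd⟩ := hab
    have hcar := (kummer hp ab.1 ab.2).mp hnd q
    have d1 := Nat.div_add_mod' ab.1 (p ^ q)
    have d2 := Nat.div_add_mod' ab.2 (p ^ q)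
    have m1 : ab.1 / p ^ q * p ^ q ≤ A / p ^ q * p ^ q :=
      Nat.mul_le_mul_right _ (Nat.div_le_div_right (by omega))
    have m2 : ab.2 / p ^ q * p ^ q ≤ B / p ^ q * p ^ q :=
      Nat.mul_le_mul_right _ (Nat.div_le_div_right (by omega))
    omega
  · have hBP : B % p ^ q < p ^ q := Nat.mod_lt _ hPpos
    set a' := A / p ^ q * p ^ q + (p ^ q - 1 - B % p ^ q) with ha'
    clear_value a'
    have ha'A : a' ≤ A := by
      rw [ha']
      rcases Nat.eq_zero_or_pos q with rfl | hqpos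
      · simp only [pow_zero, Nat.div_one, Nat.mod_one, mul_one] at *
        omega
      · obtain ⟨q', rfl⟩ : ∃ q'', q = q'' + 1 := ⟨q - 1, by omega⟩
        obtain ⟨m, hm1, hm2⟩ := hqmin q' (by omega)
        have hmq : m = q' := by
          by_contra hne
          exact hm2 (hq m (by omega))
        subst hmq
        have EA : A % p ^ (m + 1) = A / p ^ m % p * p ^ m + A % p ^ m := by
          rw [pow_succ]; exact mod_mul'' A (p ^ m) p
        have EB : B % p ^ (m + 1) = B / p ^ m % p * p ^ m + B % p ^ m := by
          rw [pow_succ]; exact mod_mul'' B (p ^ m) p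
        have hBm : B % p ^ m < p ^ m := Nat.mod_lt _ (pow_pos (by omega) m)
        have bound : p ^ m * p ≤ A / p ^ m % p * p ^ m + B / p ^ m % p * p ^ m := by
          calc p ^ m * p ≤ p ^ m * (A / p ^ m % p + B / p ^ m % p) :=
                Nat.mul_le_mul_left _ (by omega)
            _ = _ := by ring
        have hPe : p ^ (m + 1) = p ^ m * p := pow_succ p m
        obtain ⟨R, hR⟩ : ∃ x, p ^ (m + 1) = x := ⟨_, rfl⟩
        obtain ⟨P, hP⟩ : ∃ x, p ^ m = x := ⟨_, rfl⟩
        simp only [hR, hP] at EA EB hBm bound hPe dA hBP ⊢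
        omega
    have hcarry : ∀ n, a' % p ^ n + B % p ^ n < p ^ n := by
      intro n
      rcases le_or_gt n q with hn | hn
      · have hqexp : A / p ^ q * p ^ q = A / p ^ q * p ^ (q - n) * p ^ n := by
          rw [mul_assoc, ← pow_add]
          congr 2
          omega
        have h1 : a' % p ^ n = (p ^ q - 1 - B % p ^ q) % p ^ n := by
          rw [ha', hqexp, Nat.mul_add_mod']
        have hmm : B % p ^ q % p ^ n = B % p ^ n := Nat.mod_mod_of_dvd _ (pow_dvd_pow p hn)
        have du := Nat.div_add_mod' (B % p ^ q) (p ^ n)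
        have hu : B % p ^ q / p ^ n < p ^ (q - n) := by
          apply Nat.div_lt_of_lt_mul
          calc B % p ^ q < p ^ q := hBP
            _ = p ^ n * p ^ (q - n) := by rw [← pow_add]; congr 1; omega
        have hBn : B % p ^ n < p ^ n := Nat.mod_lt _ (pow_pos (by omega) n)
        have expand : (p ^ (q - n) - 1 - B % p ^ q / p ^ n) * p ^ n
            + (1 + B % p ^ q / p ^ n) * p ^ n = p ^ (q - n) * p ^ n := by
          rw [← add_mul]
          congr 1
          omega
        have e2 : (1 + B % p ^ q / p ^ n) * p ^ n
            = p ^ n + B % p ^ q / p ^ n * p ^ n := by ring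
        have epq : p ^ (q - n) * p ^ n = p ^ q := by rw [← pow_add]; congr 1; omega
        rw [h1]
        obtain ⟨R, hR⟩ : ∃ x, p ^ q = x := ⟨_, rfl⟩
        obtain ⟨P, hP⟩ : ∃ x, p ^ n = x := ⟨_, rfl⟩
        obtain ⟨Q, hQ⟩ : ∃ x, p ^ (q - n) = x := ⟨_, rfl⟩
        simp only [hR, hP, hQ] at hmm du hu hBn expand e2 epq hBP ⊢
        have hRn : R - 1 - B % R = (Q - 1 - B % R / P) * P + (P - 1 - B % P) := by omega
        rw [hRn, Nat.mul_add_mod', Nat.mod_eq_of_lt (by omega)]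
        omega
      · have hrlt : p ^ q - 1 - B % p ^ q < p ^ q := by
          obtain ⟨R, hR⟩ : ∃ x, p ^ q = x := ⟨_, rfl⟩
          simp only [hR] at hBP hPpos ⊢
          omega
        have hda' : a' / p ^ q = A / p ^ q := by
          rw [ha', add_comm, Nat.add_mul_div_right _ _ hPpos, Nat.div_eq_of_lt hrlt, zero_add]
        have hma' : a' % p ^ q = p ^ q - 1 - B % p ^ q := by
          rw [ha', Nat.mul_add_mod', Nat.mod_eq_of_lt hrlt]
        have hpn : p ^ n = p ^ q * p ^ (n - q) := by rw [← pow_add]; congr 1; omega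
        have EA' : a' % p ^ n = a' / p ^ q % p ^ (n - q) * p ^ q + a' % p ^ q := by
          rw [hpn]; exact mod_mul'' a' (p ^ q) (p ^ (n - q))
        have EB' : B % p ^ n = B / p ^ q % p ^ (n - q) * p ^ q + B % p ^ q := by
          rw [hpn]; exact mod_mul'' B (p ^ q) (p ^ (n - q))
        have hcd : ∀ k, A / p ^ q % p ^ k + B / p ^ q % p ^ k < p ^ k := by
          apply carry_of_digit hp2
          intro t
          have eA : A / p ^ q / p ^ t = A / p ^ (q + t) := by
            rw [Nat.div_div_eq_div_mul, ← pow_add]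
          have eB : B / p ^ q / p ^ t = B / p ^ (q + t) := by
            rw [Nat.div_div_eq_div_mul, ← pow_add]
          rw [eA, eB]
          exact hq (q + t) (by omega)
        have hk := hcd (n - q)
        have dist : (A / p ^ q % p ^ (n - q) + B / p ^ q % p ^ (n - q)) * p ^ q
            = A / p ^ q % p ^ (n - q) * p ^ q + B / p ^ q % p ^ (n - q) * p ^ q := add_mul _ _ _
        have bnd : (A / p ^ q % p ^ (n - q) + B / p ^ q % p ^ (n - q)) * p ^ q
            ≤ (p ^ (n - q) - 1) * p ^ q := Nat.mul_le_mul_right _ (by omega)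
        have sub1 : (p ^ (n - q) - 1) * p ^ q + p ^ q = p ^ (n - q) * p ^ q := by
          rw [Nat.sub_one_mul]
          have : p ^ q ≤ p ^ (n - q) * p ^ q :=
            Nat.le_mul_of_pos_left _ (pow_pos (by omega) _)
          omega
        have epn : p ^ (n - q) * p ^ q = p ^ n := by rw [← pow_add]; congr 1; omega
        rw [EA', EB', hda', hma']
        obtain ⟨R, hR⟩ : ∃ x, p ^ q = x := ⟨_, rfl⟩
        obtain ⟨Q, hQ⟩ : ∃ x, p ^ (n - q) = x := ⟨_, rfl⟩
        obtain ⟨N, hN⟩ : ∃ x, p ^ n = x := ⟨_, rfl⟩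
        simp only [hR, hQ, hN] at dist bnd sub1 epn hk hBP ⊢
        omega
    have hnd : ¬ p ∣ (a' + B).choose a' := (kummer hp a' B).mpr hcarry
    have hmem : (a', B) ∈ (Finset.range i ×ˢ Finset.range j).filter
        (fun ab => ¬ p ∣ Nat.choose (ab.1 + ab.2) ab.1) := by
      simp only [Finset.mem_filter, Finset.mem_product, Finset.mem_range]
      exact ⟨⟨by omega, by omega⟩, hnd⟩
    have hval : a' + B + 1 = p ^ q + (A / p ^ q * p ^ q + B / p ^ q * p ^ q) := by
      rw [ha']
      obtain ⟨R, hR⟩ : ∃ x, p ^ q = x := ⟨_, rfl⟩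
      simp only [hR] at dB hBP ⊢
      omega
    exact le_trans (le_of_eq hval.symm)
      (Finset.le_sup (f := fun ab : ℕ × ℕ => ab.1 + ab.2 + 1) hmem)
end

section
/- Let $p$ be a prime, $s \geq 0$, and $i, j$ positive integers. With $i \wedge j = \max\{a+b+1 : 0 \leq a \leq i-1,\ 0 \leq b \leq j-1,\ p \nmid \binom{a+b}{a}\}$, we have $(ip^s) \wedge (jp^s) = p^s (i \wedge j)$. -/
lemma lucas_one {p : ℕ} (hp : p.Prime) (n k : ℕ) :
    ((n.choose k : ZMod p)) =
      ((n % p).choose (k % p) : ZMod p) * ((n / p).choose (k / p) : ZMod p) := by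
  haveI : Fact p.Prime := ⟨hp⟩
  have h := Choose.choose_modEq_choose_mod_mul_choose_div_nat (p := p) (n := n) (k := k)
  have h2 := (ZMod.natCast_eq_natCast_iff _ _ _).mpr h
  push_cast at h2
  exact h2

lemma lucas_pow {p : ℕ} (hp : p.Prime) (s : ℕ) : ∀ n k : ℕ,
    ((n.choose k : ZMod p)) = ((n % p ^ s).choose (k % p ^ s) : ZMod p) *
      ((n / p ^ s).choose (k / p ^ s) : ZMod p) := by
  induction s with
  | zero => intro n k; simp [Nat.mod_one]
  | succ s ih =>
    intro n k
    have e1 : ∀ m : ℕ, m % p ^ (s + 1) % p = m % p := fun m =>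
      Nat.mod_mod_of_dvd m (dvd_pow_self p (Nat.succ_ne_zero s))
    have e2 : ∀ m : ℕ, m % p ^ (s + 1) / p = m / p % p ^ s := by
      intro m
      rw [← Nat.mod_mul_right_div_self, ← pow_succ']
    have e3 : ∀ m : ℕ, m / p / p ^ s = m / p ^ (s + 1) := by
      intro m
      rw [Nat.div_div_eq_div_mul, ← pow_succ']
    rw [lucas_one hp n k, ih (n / p) (k / p),
        lucas_one hp (n % p ^ (s + 1)) (k % p ^ (s + 1)),
        e1, e1, e2, e2, e3, e3]
    ring

theorem stmt_6 (p : ℕ) (hp : p.Prime) (s i j : ℕ) (hi : 1 ≤ i) (hj : 1 ≤ j) :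
    wedge p (i * p ^ s) (j * p ^ s) = p ^ s * wedge p i j := by
  haveI : Fact p.Prime := ⟨hp⟩
  have hps : 0 < p ^ s := pow_pos hp.pos s
  have hdvd : ∀ m : ℕ, ¬ p ∣ m ↔ (m : ZMod p) ≠ 0 := fun m =>
    not_congr (ZMod.natCast_eq_zero_iff m p).symm
  have hkey : ∀ q r : ℕ, r < p ^ s →
      (p ^ s * q + r) % p ^ s = r ∧ (p ^ s * q + r) / p ^ s = q := by
    intro q r hr
    constructor
    · rw [mul_comm, Nat.mul_add_mod', Nat.mod_eq_of_lt hr]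
    · rw [Nat.mul_add_div hps, Nat.div_eq_of_lt hr, Nat.add_zero]
  rw [wedge, wedge, if_neg (by push_neg; exact ⟨Nat.mul_ne_zero (by omega) hps.ne', Nat.mul_ne_zero (by omega) hps.ne'⟩), if_neg (by omega)]
  apply le_antisymm
  · apply Finset.sup_le
    rintro ⟨a, b⟩ hab
    simp only [Finset.mem_filter, Finset.mem_product, Finset.mem_range] at hab
    obtain ⟨⟨ha, hb⟩, hnd⟩ := hab
    rw [hdvd, lucas_pow hp s] at hnd
    set A := a % p ^ s with hA
    set B := b % p ^ s with hB
    set qa := a / p ^ s with hqa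
    set qb := b / p ^ s with hqb
    have ea : p ^ s * qa + A = a := Nat.div_add_mod a (p ^ s)
    have eb : p ^ s * qb + B = b := Nat.div_add_mod b (p ^ s)
    have hA' : A < p ^ s := Nat.mod_lt _ hps
    have hB' : B < p ^ s := Nat.mod_lt _ hps
    have h1 : (((a + b) % p ^ s).choose A : ZMod p) ≠ 0 := fun h => hnd (by rw [h, zero_mul])
    have h2 : (((a + b) / p ^ s).choose qa : ZMod p) ≠ 0 := fun h => hnd (by rw [h, mul_zero])
    have hle : A ≤ (a + b) % p ^ s := by
      by_contra hlt
      push_neg at hlt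
      exact h1 (by rw [Nat.choose_eq_zero_of_lt hlt, Nat.cast_zero])
    have hcarry : A + B < p ^ s := by
      by_contra hge
      push_neg at hge
      obtain ⟨r, hr⟩ := Nat.le.dest hge
      have hab : a + b = p ^ s * (qa + qb + 1) + r := by
        have expand : p ^ s * (qa + qb + 1) = p ^ s * qa + p ^ s * qb + p ^ s := by ring
        omega
      have hm := (hkey (qa + qb + 1) r (by omega)).1
      rw [← hab] at hm
      omega
    have hab : a + b = p ^ s * (qa + qb) + (A + B) := by
      have expand : p ^ s * (qa + qb) = p ^ s * qa + p ^ s * qb := by ring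
      omega
    have ediv : (a + b) / p ^ s = qa + qb := by
      rw [hab]; exact (hkey _ _ hcarry).2
    rw [ediv, ← hdvd] at h2
    have hmem : (qa, qb) ∈ ((Finset.range i ×ˢ Finset.range j).filter
        (fun ab => ¬ p ∣ Nat.choose (ab.1 + ab.2) ab.1)) := by
      simp only [Finset.mem_filter, Finset.mem_product, Finset.mem_range]
      exact ⟨⟨(Nat.div_lt_iff_lt_mul hps).mpr ha, (Nat.div_lt_iff_lt_mul hps).mpr hb⟩, h2⟩
    have hsup := Finset.le_sup (f := fun ab : ℕ × ℕ => ab.1 + ab.2 + 1) hmem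
    calc a + b + 1 ≤ p ^ s * (qa + qb + 1) := by
          have expand : p ^ s * (qa + qb + 1) = p ^ s * qa + p ^ s * qb + p ^ s := by ring
          omega
      _ ≤ p ^ s * _ := Nat.mul_le_mul_left _ hsup
  · have h00 : ((0, 0) : ℕ × ℕ) ∈ ((Finset.range i ×ˢ Finset.range j).filter
        (fun ab => ¬ p ∣ Nat.choose (ab.1 + ab.2) ab.1)) := by
      simp only [Finset.mem_filter, Finset.mem_product, Finset.mem_range]
      exact ⟨⟨hi, hj⟩, by simpa using hp.one_lt.ne'⟩
    obtain ⟨⟨a, b⟩, habS, hsup⟩ := Finset.exists_mem_eq_sup _ ⟨(0, 0), h00⟩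
      (fun ab : ℕ × ℕ => ab.1 + ab.2 + 1)
    simp only [Finset.mem_filter, Finset.mem_product, Finset.mem_range] at habS
    obtain ⟨⟨ha, hb⟩, hnd⟩ := habS
    rw [hsup]
    set a' := p ^ s * a + (p ^ s - 1) with ha'
    set b' := p ^ s * b + 0 with hb'
    have hab' : a' + b' = p ^ s * (a + b) + (p ^ s - 1) := by
      have expand : p ^ s * (a + b) = p ^ s * a + p ^ s * b := by ring
      omega
    have hma : a' % p ^ s = p ^ s - 1 := (hkey a _ (by omega)).1
    have hda : a' / p ^ s = a := (hkey a _ (by omega)).2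
    have hmab : (a' + b') % p ^ s = p ^ s - 1 := by rw [hab']; exact (hkey _ _ (by omega)).1
    have hdab : (a' + b') / p ^ s = a + b := by rw [hab']; exact (hkey _ _ (by omega)).2
    have hnd' : ¬ p ∣ Nat.choose (a' + b') a' := by
      rw [hdvd, lucas_pow hp s, hma, hmab, hda, hdab, Nat.choose_self, Nat.cast_one, one_mul]
      exact (hdvd _).mp hnd
    have hmem : (a', b') ∈ ((Finset.range (i * p ^ s) ×ˢ Finset.range (j * p ^ s)).filter
        (fun ab => ¬ p ∣ Nat.choose (ab.1 + ab.2) ab.1)) := by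
      simp only [Finset.mem_filter, Finset.mem_product, Finset.mem_range]
      refine ⟨⟨?_, ?_⟩, hnd'⟩
      · have h1 : p ^ s * (a + 1) ≤ p ^ s * i := Nat.mul_le_mul_left _ ha
        have e : p ^ s * (a + 1) = p ^ s * a + p ^ s := by ring
        have e2 : p ^ s * i = i * p ^ s := by ring
        omega
      · have h1 : p ^ s * (b + 1) ≤ p ^ s * j := Nat.mul_le_mul_left _ hb
        have e : p ^ s * (b + 1) = p ^ s * b + p ^ s := by ring
        have e2 : p ^ s * j = j * p ^ s := by ring
        omega
    have hsup' := Finset.le_sup (f := fun ab : ℕ × ℕ => ab.1 + ab.2 + 1) hmem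
    calc p ^ s * (a + b + 1) = a' + b' + 1 := by
          have expand : p ^ s * (a + b + 1) = p ^ s * (a + b) + p ^ s := by ring
          omega
      _ ≤ _ := hsup'
end

section
/- Let $p$ be a prime, $s \geq 0$, and $i, j$ positive integers. With $u \wedge v = \max\{a+b+1 : 0 \leq a \leq u-1,\ 0 \leq b \leq v-1,\ p \nmid \binom{a+b}{a}\}$, the integer $(ip^s) \wedge j$ is divisible by $p^s$. -/
open Finset

lemma Nat.mod_add_lt_of_dvd_of_not_dvd {d m n : ℕ} (hm : 0 < m) (hdm : d ∣ m)
    (hdn : d ∣ n + 1) (hmn : ¬ m ∣ n + 1) : n % m + d < m := by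
  have hlt : n % m + 1 < m := by
    refine lt_of_le_of_ne (Nat.mod_lt n hm) fun h => hmn ⟨n / m + 1, ?_⟩
    have := Nat.div_add_mod n m
    rw [mul_add, mul_one]
    omega
  have hd : d ∣ n % m + 1 := by
    refine (Nat.dvd_add_right (dvd_mul_of_dvd_left hdm (n / m))).mp ?_
    rwa [← add_assoc, Nat.div_add_mod]
  obtain ⟨x, hx⟩ := hd
  obtain ⟨y, rfl⟩ := hdm
  have hxy : x < y := Nat.lt_of_mul_lt_mul_left (a := d) (by omega)
  nlinarith

lemma Nat.add_lt_mul_of_mod_add_lt {a d i m : ℕ} (ha : a < i * m) (h : a % m + d < m) :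
    a + d < i * m := by
  have hm : 0 < m := by omega
  have hq : a / m + 1 ≤ i := (Nat.div_lt_iff_lt_mul hm).mpr ha
  have := Nat.div_add_mod a m
  nlinarith

lemma Nat.Prime.not_dvd_choose_add_iff {p : ℕ} (hp : p.Prime) (a b : ℕ) :
    ¬ p ∣ (a + b).choose a ↔ ∀ i, a % p ^ i + b % p ^ i < p ^ i := by
  have := Fact.mk hp
  have hb := Nat.lt_succ_self (Nat.log p (b + a))
  have hC : (a + b).choose a ≠ 0 := (Nat.choose_pos (Nat.le_add_right a b)).ne'
  rw [show ¬ p ∣ (a + b).choose a ↔ padicValNat p ((a + b).choose a) = 0 by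
      simp [padicValNat.eq_zero_iff, hp.ne_one, hC], add_comm, padicValNat_choose' hb,
    Finset.card_eq_zero, filter_eq_empty_iff]
  simp only [mem_Ico, not_le]
  refine ⟨fun h i => ?_, fun h i _ => h i⟩
  rcases Nat.eq_zero_or_pos i with rfl | hi
  · simp [Nat.mod_one]
  by_cases hib : i < Nat.log p (b + a) + 1
  · exact h ⟨hi, hib⟩
  · have := Nat.lt_pow_of_log_lt hp.one_lt (show Nat.log p (b + a) < i by omega)
    have := Nat.mod_le a (p ^ i)
    have := Nat.mod_le b (p ^ i)
    omega

section Carries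

variable {p a b k i : ℕ}

lemma mod_pow_add_pow_add_mod_pow_lt (hp : p.Prime) (hab : ¬ p ∣ (a + b).choose a)
    (hk : p ^ k ∣ a + b + 1) (hi : ¬ p ^ i ∣ a + b + 1) (hki : k ≤ i) :
    a % p ^ i + p ^ k + b % p ^ i < p ^ i := by
  have hsum := Nat.add_mod_of_add_mod_lt ((hp.not_dvd_choose_add_iff a b).mp hab i)
  have := Nat.mod_add_lt_of_dvd_of_not_dvd (pow_pos hp.pos i) (pow_dvd_pow p hki) hk hi
  omega

lemma not_dvd_choose_add_pow_add (hp : p.Prime) (hab : ¬ p ∣ (a + b).choose a)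
    (hk : p ^ k ∣ a + b + 1) (hk' : ¬ p ^ (k + 1) ∣ a + b + 1) :
    ¬ p ∣ (a + p ^ k + b).choose (a + p ^ k) := by
  rw [hp.not_dvd_choose_add_iff]
  intro i
  rcases le_or_gt i k with hik | hki
  · obtain ⟨c, hc⟩ := pow_dvd_pow p hik
    rw [hc, Nat.add_mul_mod_self_left]
    exact (hp.not_dvd_choose_add_iff a b).mp hab i
  · have hi : ¬ p ^ i ∣ a + b + 1 := fun h => hk' ((pow_dvd_pow p hki).trans h)
    have hlt := mod_pow_add_pow_add_mod_pow_lt hp hab hk hi hki.le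
    have hpk : p ^ k % p ^ i = p ^ k := Nat.mod_eq_of_lt (Nat.pow_lt_pow_right hp.one_lt hki)
    have hno_carry : a % p ^ i + p ^ k % p ^ i < p ^ i := by
      rw [hpk]
      exact (Nat.le_add_right _ _).trans_lt hlt
    rwa [Nat.add_mod_of_add_mod_lt hno_carry, hpk]

end Carries

section Wedge

variable {p u v : ℕ}

lemma le_wedge {a b : ℕ} (ha : a < u) (hb : b < v) (hab : ¬ p ∣ (a + b).choose a) :
    a + b + 1 ≤ wedge p u v := by
  rw [wedge, if_neg (by omega)]
  refine le_sup (f := fun ab : ℕ × ℕ => ab.1 + ab.2 + 1) (b := (a, b)) ?_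
  simpa [ha, hb] using hab

lemma exists_wedge_eq (hp : p ≠ 1) (hu : u ≠ 0) (hv : v ≠ 0) :
    ∃ a < u, ∃ b < v, ¬ p ∣ (a + b).choose a ∧ wedge p u v = a + b + 1 := by
  rw [wedge, if_neg (by omega)]
  have h00 : ((0, 0) : ℕ × ℕ) ∈ (range u ×ˢ range v).filter
      (fun ab => ¬ p ∣ Nat.choose (ab.1 + ab.2) ab.1) := by
    simp [Nat.pos_of_ne_zero hu, Nat.pos_of_ne_zero hv, hp]
  obtain ⟨⟨a, b⟩, hab, hsup⟩ :=
    exists_mem_eq_sup _ ⟨_, h00⟩ fun ab : ℕ × ℕ => ab.1 + ab.2 + 1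
  simp only [mem_filter, mem_product, mem_range] at hab
  exact ⟨a, hab.1.1, b, hab.1.2, hab.2, hsup⟩

end Wedge

theorem stmt_7 (p : ℕ) (hp : p.Prime) (s i j : ℕ) (hi : 1 ≤ i) (hj : 1 ≤ j) :
    p ^ s ∣ wedge p (i * p ^ s) j := by
  have := Fact.mk hp
  obtain ⟨a, ha, b, hb, hab, hw⟩ :=
    exists_wedge_eq (u := i * p ^ s) (v := j) hp.ne_one
      (Nat.mul_ne_zero (by omega) (pow_ne_zero s hp.ne_zero)) (by omega)
  rw [hw]
  by_contra hs
  set k := padicValNat p (a + b + 1)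
  have hk : p ^ k ∣ a + b + 1 := pow_padicValNat_dvd
  have hk' : ¬ p ^ (k + 1) ∣ a + b + 1 := pow_succ_padicValNat_not_dvd (by omega)
  have hks : k < s := not_le.mp fun h => hs ((pow_dvd_pow p h).trans hk)
  have hmod := mod_pow_add_pow_add_mod_pow_lt hp hab hk hs hks.le
  have hlt : a + p ^ k < i * p ^ s :=
    Nat.add_lt_mul_of_mod_add_lt ha ((Nat.le_add_right _ _).trans_lt hmod)
  have hle := le_wedge (p := p) hlt hb (not_dvd_choose_add_pow_add hp hab hk hk')
  have := pow_pos hp.pos k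
  omega
end

section
/- Let $p$ be a prime and define, for positive integers $u, v$, $u \wedge v = \max\{a+b+1 : 0 \leq a \leq u-1,\ 0 \leq b \leq v-1,\ p \nmid \binom{a+b}{a}\}$, extended by $0 \wedge v = u \wedge 0 = 0$. Then $\wedge$ is associative: $(u \wedge v) \wedge w = u \wedge (v \wedge w)$ for all nonnegative integers $u, v, w$. -/
namespace S9

def NC (p a b : ℕ) : Prop := ∀ m, digit p m a + digit p m b < p

lemma digit_zero (p n : ℕ) : digit p 0 n = n % p := by simp [digit]

lemma digit_succ (p m n : ℕ) : digit p (m+1) n = digit p m (n / p) := by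
  simp [digit, pow_succ, Nat.div_div_eq_div_mul, mul_comm]

lemma NC_swap {p a b : ℕ} (h : NC p a b) : NC p b a := fun m => by have := h m; omega

lemma NC_div {p a b : ℕ} (h : NC p a b) : NC p (a / p) (b / p) := fun m => by
  have := h (m+1); rwa [digit_succ, digit_succ] at this

lemma NC_zero {p : ℕ} (hp : 0 < p) : NC p 0 0 := fun m => by simp [digit]; omega

lemma NC_of {p a b : ℕ} (h0 : a % p + b % p < p) (h1 : NC p (a/p) (b/p)) : NC p a b := by
  intro m
  cases m with
  | zero => simpa [digit_zero] using h0
  | succ m => rw [digit_succ, digit_succ]; exact h1 m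

lemma key {p : ℕ} (hp : p.Prime) : ∀ n a b, a + b ≤ n →
    (¬ p ∣ (a+b).choose a ↔ NC p a b) := by
  haveI : Fact p.Prime := ⟨hp⟩
  intro n
  induction n with
  | zero =>
    intro a b h
    obtain ⟨rfl, rfl⟩ : a = 0 ∧ b = 0 := by omega
    simpa [Nat.choose, hp.not_dvd_one] using NC_zero hp.pos
  | succ n ih =>
    intro a b hab
    rcases Nat.eq_zero_or_pos (a + b) with h0 | h0
    · obtain ⟨rfl, rfl⟩ : a = 0 ∧ b = 0 := by omega
      simpa [Nat.choose, hp.not_dvd_one] using NC_zero hp.pos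
    have hmod := Choose.choose_modEq_choose_mod_mul_choose_div_nat (p := p) (n := a+b) (k := a)
    have hdvd : p ∣ (a+b).choose a ↔
        p ∣ ((a+b) % p).choose (a % p) * ((a+b)/p).choose (a/p) := by
      rw [Nat.dvd_iff_mod_eq_zero, Nat.dvd_iff_mod_eq_zero, hmod]
    by_cases h : a % p + b % p < p
    · have h1 : (a + b) % p = a % p + b % p := by
        rw [Nat.add_mod, Nat.mod_eq_of_lt h]
      have h2 : (a + b) / p = a / p + b / p := by
        rw [Nat.add_div hp.pos, if_neg (by omega), Nat.add_zero]
      have h3 : ¬ p ∣ (a % p + b % p).choose (a % p) := by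
        intro hd
        have hcd : (a % p + b % p).choose (a % p) ∣ Nat.factorial (a % p + b % p) := by
          have hh := Nat.choose_mul_factorial_mul_factorial
            (Nat.le_add_right (a % p) (b % p))
          exact ⟨(a % p).factorial * (a % p + b % p - a % p).factorial, by rw [← hh]; ring⟩
        have := (Nat.Prime.dvd_factorial hp).mp (hd.trans hcd)
        omega
      have hb : a / p + b / p ≤ n := by
        have ha' : a / p ≤ a := Nat.div_le_self a p
        have hb' : b / p ≤ b := Nat.div_le_self b p
        rcases Nat.eq_zero_or_pos a with rfl | hap
        · rcases Nat.eq_zero_or_pos b with rfl | hbp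
          · omega
          · have := Nat.div_lt_self hbp hp.one_lt; omega
        · have := Nat.div_lt_self hap hp.one_lt; omega
      rw [hdvd, h1, h2, hp.dvd_mul, not_or]
      constructor
      · rintro ⟨-, hq⟩
        exact NC_of h (((ih _ _ hb)).mp hq)
      · intro hnc
        exact ⟨h3, (ih _ _ hb).mpr (NC_div hnc)⟩
    · have h1 : (a + b) % p < a % p := by
        have := Nat.mod_lt a hp.pos
        have := Nat.mod_lt b hp.pos
        have h1' : (a + b) % p = a % p + b % p - p := by
          rw [Nat.add_mod]
          rw [Nat.mod_eq_sub_mod (by omega), Nat.mod_eq_of_lt (by omega)]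
        omega
      have : p ∣ (a+b).choose a := by
        rw [hdvd, Nat.choose_eq_zero_of_lt h1, zero_mul]; exact dvd_zero p
      constructor
      · intro hc; exact absurd this hc
      · intro hnc
        have := hnc 0
        rw [digit_zero, digit_zero] at this
        omega

lemma NC_sub_one_right {p a b : ℕ} (hp : 0 < p) (hb : b % p ≠ 0) (h : NC p a b) :
    NC p a (b - 1) := by
  have e : b - 1 = p * (b / p) + (b % p - 1) := by
    have := Nat.div_add_mod b p; omega
  have hmlt : b % p - 1 < p := lt_of_le_of_lt (Nat.sub_le _ _) (Nat.mod_lt b hp)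
  have hm : (b - 1) % p = b % p - 1 := by
    rw [e, Nat.mul_add_mod, Nat.mod_eq_of_lt hmlt]
  have hd : (b - 1) / p = b / p := by
    rw [e, Nat.mul_add_div hp, Nat.div_eq_of_lt hmlt, Nat.add_zero]
  intro m
  cases m with
  | zero =>
    rw [digit_zero, digit_zero, hm]
    have := h 0; rw [digit_zero, digit_zero] at this; omega
  | succ m =>
    rw [digit_succ, digit_succ, hd]
    have := h (m+1); rwa [digit_succ, digit_succ] at this

lemma NC_shift {p a b : ℕ} (hp : 1 < p) (h : NC p a b) :
    NC p (p * a) (p * b + (p - 1)) := by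
  have hp0 : 0 < p := by omega
  intro m
  cases m with
  | zero =>
    rw [digit_zero, digit_zero, Nat.mul_mod_right, Nat.mul_add_mod,
      Nat.mod_eq_of_lt (by omega)]
    omega
  | succ m =>
    rw [digit_succ, digit_succ, Nat.mul_div_cancel_left a hp0,
      Nat.mul_add_div hp0, Nat.div_eq_of_lt (by omega), Nat.add_zero]
    exact h m

lemma decr {p : ℕ} (hp : p.Prime) : ∀ n a b, a + b ≤ n → NC p a b → 0 < a + b →
    ∃ a' b', a' ≤ a ∧ b' ≤ b ∧ NC p a' b' ∧ a' + b' + 1 = a + b := by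
  intro n
  induction n with
  | zero => intro a b h _ h0; omega
  | succ n ih =>
    intro a b hn h h0
    by_cases hb : b % p ≠ 0
    · have hb0 : 0 < b := Nat.pos_of_ne_zero (by rintro rfl; simp at hb)
      exact ⟨a, b - 1, le_rfl, Nat.sub_le _ _, NC_sub_one_right hp.pos hb h, by omega⟩
    by_cases ha : a % p ≠ 0
    · have ha0 : 0 < a := Nat.pos_of_ne_zero (by rintro rfl; simp at ha)
      exact ⟨a - 1, b, Nat.sub_le _ _, le_rfl,
        NC_swap (NC_sub_one_right hp.pos ha (NC_swap h)), by omega⟩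
    push_neg at ha hb
    have hda : p * (a / p) = a := Nat.mul_div_cancel' (Nat.dvd_of_mod_eq_zero ha)
    have hdb : p * (b / p) = b := Nat.mul_div_cancel' (Nat.dvd_of_mod_eq_zero hb)
    have h2a : 2 * (a / p) ≤ p * (a / p) := Nat.mul_le_mul_right _ hp.two_le
    have h2b : 2 * (b / p) ≤ p * (b / p) := Nat.mul_le_mul_right _ hp.two_le
    have hza : a / p = 0 → a = 0 := fun h0 => by rw [← hda, h0, Nat.mul_zero]
    have hzb : b / p = 0 → b = 0 := fun h0 => by rw [← hdb, h0, Nat.mul_zero]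
    have hq0 : 0 < a / p + b / p := by omega
    have hqn : a / p + b / p ≤ n := by omega
    obtain ⟨a'', b'', ha'', hb'', h'', he⟩ := ih (a / p) (b / p) hqn (NC_div h) hq0
    rcases lt_or_ge b'' (b / p) with hlt | hge
    · refine ⟨p * a'', p * b'' + (p - 1), ?_, ?_, NC_shift hp.one_lt h'', ?_⟩
      · have := Nat.mul_le_mul_left p ha''; omega
      · have : p * (b'' + 1) ≤ p * (b / p) := Nat.mul_le_mul_left p hlt
        rw [Nat.mul_add] at this; omega
      · have e1 : p * a'' + p * b'' + p = a + b := by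
          have e2 : p * (a'' + b'' + 1) = p * (a / p + b / p) := by rw [he]
          rw [Nat.mul_add, Nat.mul_add, Nat.mul_one, Nat.mul_add] at e2
          omega
        have := hp.two_le; omega
    · have hlt' : a'' < a / p := by omega
      refine ⟨p * a'' + (p - 1), p * b'', ?_, ?_,
        NC_swap (NC_shift hp.one_lt (NC_swap h'')), ?_⟩
      · have : p * (a'' + 1) ≤ p * (a / p) := Nat.mul_le_mul_left p hlt'
        rw [Nat.mul_add] at this; omega
      · have := Nat.mul_le_mul_left p hb''; omega
      · have e1 : p * a'' + p * b'' + p = a + b := by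
          have e2 : p * (a'' + b'' + 1) = p * (a / p + b / p) := by rw [he]
          rw [Nat.mul_add, Nat.mul_add, Nat.mul_one, Nat.mul_add] at e2
          omega
        have := hp.two_le; omega

lemma decomp {p : ℕ} (hp : p.Prime) : ∀ d a b s, NC p a b → s + d = a + b →
    ∃ a' b', a' ≤ a ∧ b' ≤ b ∧ NC p a' b' ∧ a' + b' = s := by
  intro d
  induction d with
  | zero => exact fun a b s h hs => ⟨a, b, le_rfl, le_rfl, h, by omega⟩
  | succ d ih =>
    intro a b s h hs
    obtain ⟨a1, b1, ha1, hb1, h1, he1⟩ := decr hp (a + b) a b le_rfl h (by omega)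
    obtain ⟨a', b', ha', hb', h', he'⟩ := ih a1 b1 s h1 (by omega)
    exact ⟨a', b', ha'.trans ha1, hb'.trans hb1, h', he'⟩
lemma digit_add {p a b : ℕ} (hp : 0 < p) (h : NC p a b) :
    ∀ m, digit p m (a + b) = digit p m a + digit p m b := by
  intro m
  induction m generalizing a b with
  | zero =>
    have h0 := h 0
    rw [digit_zero, digit_zero] at h0
    rw [digit_zero, digit_zero, digit_zero, Nat.add_mod]
    exact Nat.mod_eq_of_lt h0
  | succ m ih =>
    have h0 := h 0
    rw [digit_zero, digit_zero] at h0
    have hd : (a + b) / p = a / p + b / p := by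
      rw [Nat.add_div hp, if_neg (by omega), Nat.add_zero]
    rw [digit_succ, digit_succ, digit_succ, hd]
    exact ih (NC_div h)

lemma le_wedge {p u v a b : ℕ} (hp : p.Prime) (ha : a < u) (hb : b < v) (h : NC p a b) :
    a + b + 1 ≤ wedge p u v := by
  rw [wedge, if_neg (by omega)]
  exact Finset.le_sup (b := (a, b)) (f := fun ab : ℕ × ℕ => ab.1 + ab.2 + 1)
    (by simp only [Finset.mem_filter, Finset.mem_product, Finset.mem_range]
        exact ⟨⟨ha, hb⟩, (key hp (a + b) a b le_rfl).mpr h⟩)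

lemma wedge_exists {p u v : ℕ} (hp : p.Prime) (hu : u ≠ 0) (hv : v ≠ 0) :
    ∃ a b, a < u ∧ b < v ∧ NC p a b ∧ wedge p u v = a + b + 1 := by
  have hmem : ((0, 0) : ℕ × ℕ) ∈ (Finset.range u ×ˢ Finset.range v).filter
      (fun ab => ¬ p ∣ Nat.choose (ab.1 + ab.2) ab.1) := by
    simp only [Finset.mem_filter, Finset.mem_product, Finset.mem_range]
    exact ⟨⟨Nat.pos_of_ne_zero hu, Nat.pos_of_ne_zero hv⟩, by simpa using hp.not_dvd_one⟩
  obtain ⟨ab, hab, hsup⟩ := Finset.exists_mem_eq_sup _ ⟨(0, 0), hmem⟩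
    (fun ab : ℕ × ℕ => ab.1 + ab.2 + 1)
  simp only [Finset.mem_filter, Finset.mem_product, Finset.mem_range] at hab
  refine ⟨ab.1, ab.2, hab.1.1, hab.1.2, (key hp (ab.1 + ab.2) ab.1 ab.2 le_rfl).mp hab.2, ?_⟩
  rw [wedge, if_neg (by omega)]
  exact hsup

lemma wedge_le {p u v X : ℕ} (hp : p.Prime)
    (hX : ∀ a b, a < u → b < v → NC p a b → a + b + 1 ≤ X) : wedge p u v ≤ X := by
  rw [wedge]
  split
  · exact Nat.zero_le X
  · apply Finset.sup_le
    intro ab hab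
    simp only [Finset.mem_filter, Finset.mem_product, Finset.mem_range] at hab
    exact hX ab.1 ab.2 hab.1.1 hab.1.2 ((key hp (ab.1 + ab.2) ab.1 ab.2 le_rfl).mp hab.2)

lemma wedge_zero_left {p v : ℕ} : wedge p 0 v = 0 := by simp [wedge]

lemma wedge_zero_right {p u : ℕ} : wedge p u 0 = 0 := by simp [wedge]

end S9

open S9 in
theorem stmt_9 (p : ℕ) (hp : p.Prime) :
    ∀ u v w : ℕ, wedge p (wedge p u v) w = wedge p u (wedge p v w) := by
  intro u v w
  rcases eq_or_ne u 0 with rfl | hu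
  · simp [wedge_zero_left]
  rcases eq_or_ne v 0 with rfl | hv
  · simp [wedge_zero_left, wedge_zero_right]
  rcases eq_or_ne w 0 with rfl | hw
  · simp [wedge_zero_left, wedge_zero_right]
  have huv : wedge p u v ≠ 0 := by
    have := le_wedge hp (Nat.pos_of_ne_zero hu) (Nat.pos_of_ne_zero hv) (NC_zero hp.pos)
    omega
  have hvw : wedge p v w ≠ 0 := by
    have := le_wedge hp (Nat.pos_of_ne_zero hv) (Nat.pos_of_ne_zero hw) (NC_zero hp.pos)
    omega
  apply le_antisymm
  · apply wedge_le hp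
    intro s c hs hc hsc
    obtain ⟨a0, b0, ha0, hb0, h0, he0⟩ := wedge_exists hp hu hv
    obtain ⟨a, b, ha, hb, hab, rfl⟩ := decomp hp (a0 + b0 - s) a0 b0 s h0 (by omega)
    have h3 : ∀ m, digit p m a + digit p m b + digit p m c < p := by
      intro m
      have := hsc m
      rwa [digit_add hp.pos hab] at this
    have hbc : NC p b c := fun m => by have := h3 m; omega
    have hat : NC p a (b + c) := fun m => by
      rw [digit_add hp.pos hbc]; have := h3 m; omega
    have h1 : b + c + 1 ≤ wedge p v w := le_wedge hp (lt_of_le_of_lt hb hb0) hc hbc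
    have h2 : a + (b + c) + 1 ≤ wedge p u (wedge p v w) :=
      le_wedge hp (lt_of_le_of_lt ha ha0) (by omega) hat
    omega
  · apply wedge_le hp
    intro a t ha ht hat
    obtain ⟨b0, c0, hb0, hc0, h0, he0⟩ := wedge_exists hp hv hw
    obtain ⟨b, c, hb, hc, hbc, rfl⟩ := decomp hp (b0 + c0 - t) b0 c0 t h0 (by omega)
    have h3 : ∀ m, digit p m a + digit p m b + digit p m c < p := by
      intro m
      have := hat m
      rw [digit_add hp.pos hbc] at this
      omega
    have hab : NC p a b := fun m => by have := h3 m; omega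
    have hsc : NC p (a + b) c := fun m => by
      rw [digit_add hp.pos hab]; have := h3 m; omega
    have h1 : a + b + 1 ≤ wedge p u v := le_wedge hp ha (lt_of_le_of_lt hb hb0) hab
    have h2 : (a + b) + c + 1 ≤ wedge p (wedge p u v) w :=
      le_wedge hp (by omega) (lt_of_le_of_lt hc hc0) hsc
    omega
end

section
/- Let $p$ be a prime. The set $\mathbb{N}$ equipped with addition $\vee = \max$ and multiplication $\wedge$ (defined by $u \wedge v = \max\{a+b+1 : 0 \leq a \leq u-1,\ 0 \leq b \leq v-1,\ p \nmid \binom{a+b}{a}\}$ for $u, v \geq 1$, and $0 \wedge v = u \wedge 0 = 0$) is a commutative semiring with additive identity $0$ and multiplicative identity $1$. -/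
def NoCarry (p a b : ℕ) : Prop := ∀ i, a % p ^ i + b % p ^ i < p ^ i

def IsNoCarrySum (p u v n : ℕ) : Prop := ∃ a < u, ∃ b < v, NoCarry p a b ∧ a + b = n

variable {p a b c j n u v w : ℕ}

namespace NoCarry

theorem symm (h : NoCarry p a b) : NoCarry p b a := fun i => by
  have := h i; omega

theorem add_mod (h : NoCarry p a b) (i : ℕ) : (a + b) % p ^ i = a % p ^ i + b % p ^ i :=
  (Nat.add_mod _ _ _).trans (Nat.mod_eq_of_lt (h i))

theorem sub_one_left (hp : 0 < p) (h : NoCarry p a b) (hb : p ^ j ∣ b)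
    (ha : ¬ p ^ (j + 1) ∣ a) : NoCarry p (a - 1) b := fun i => by
  rcases le_or_gt i j with hij | hji
  · rw [Nat.mod_eq_zero_of_dvd ((pow_dvd_pow p hij).trans hb), add_zero]
    exact Nat.mod_lt _ (pow_pos hp i)
  · have hai : a % p ^ i ≠ 0 := fun h0 =>
      ha ((pow_dvd_pow p hji).trans (Nat.dvd_of_mod_eq_zero h0))
    have hlt := Nat.mod_lt a (pow_pos hp i)
    have hdiv := Nat.div_add_mod a (p ^ i)
    have hbound := h i
    clear ha hb
    set P := p ^ i
    have hmod : (a - 1) % P = a % P - 1 := by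
      rw [show a - 1 = P * (a / P) + (a % P - 1) by omega, Nat.mul_add_mod]
      exact Nat.mod_eq_of_lt (by omega)
    omega

/-- The descent step: `j` is the `p`-adic valuation of `n + 1`, a power of `p` dividing both
summands, and the summand not divisible by `p ^ (j + 1)` is the one lowered. -/
theorem exists_add_eq (hp : 1 < p) (h : NoCarry p a b) (hn : a + b = n + 1) :
    ∃ a' ≤ a, ∃ b' ≤ b, NoCarry p a' b' ∧ a' + b' = n := by
  obtain ⟨j, m, hpm, hm⟩ := Nat.exists_eq_pow_mul_and_not_dvd n.add_one_ne_zero p hp.ne'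
  have hsum : a % p ^ j + b % p ^ j = 0 := by
    rw [← h.add_mod, hn, hm, Nat.mul_mod_right]
  have hja : p ^ j ∣ a := Nat.dvd_of_mod_eq_zero (Nat.add_eq_zero_iff.mp hsum).1
  have hjb : p ^ j ∣ b := Nat.dvd_of_mod_eq_zero (Nat.add_eq_zero_iff.mp hsum).2
  have hnot : ¬ (p ^ (j + 1) ∣ a ∧ p ^ (j + 1) ∣ b) := by
    rintro ⟨ha, hb⟩
    have := dvd_add ha hb
    rw [hn, hm, pow_succ] at this
    exact hpm (Nat.dvd_of_mul_dvd_mul_left (pow_pos (by omega) j) this)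
  by_cases ha : p ^ (j + 1) ∣ a
  · have hb : ¬ p ^ (j + 1) ∣ b := fun hb => hnot ⟨ha, hb⟩
    have hb1 : b ≠ 0 := by rintro rfl; exact hb (dvd_zero _)
    exact ⟨a, le_rfl, b - 1, Nat.sub_le _ _, (h.symm.sub_one_left (by omega) hja hb).symm,
      by omega⟩
  · have ha1 : a ≠ 0 := by rintro rfl; exact ha (dvd_zero _)
    exact ⟨a - 1, Nat.sub_le _ _, b, le_rfl, h.sub_one_left (by omega) hjb ha, by omega⟩

end NoCarry

theorem noCarry_zero_left (hp : 0 < p) (b : ℕ) : NoCarry p 0 b := fun i => by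
  simpa using Nat.mod_lt b (pow_pos hp i)

theorem noCarry_add_left_iff (h : NoCarry p a b) :
    NoCarry p (a + b) c ↔ ∀ i, a % p ^ i + b % p ^ i + c % p ^ i < p ^ i := by
  simp only [NoCarry, h.add_mod]

theorem noCarry_add_right_iff (h : NoCarry p b c) :
    NoCarry p a (b + c) ↔ ∀ i, a % p ^ i + b % p ^ i + c % p ^ i < p ^ i := by
  simp only [NoCarry, h.add_mod, add_assoc]

theorem noCarry_assoc :
    NoCarry p a b ∧ NoCarry p (a + b) c ↔ NoCarry p b c ∧ NoCarry p a (b + c) := by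
  constructor
  · rintro ⟨hab, habc⟩
    have h := (noCarry_add_left_iff hab).1 habc
    have hbc : NoCarry p b c := fun i =>
      (Nat.le_add_left _ _).trans_lt (by simpa only [add_assoc] using h i)
    exact ⟨hbc, (noCarry_add_right_iff hbc).2 h⟩
  · rintro ⟨hbc, habc⟩
    have h := (noCarry_add_right_iff hbc).1 habc
    have hab : NoCarry p a b := fun i => (Nat.le_add_right _ _).trans_lt (h i)
    exact ⟨hab, (noCarry_add_left_iff hab).2 h⟩

theorem noCarry_iff_not_dvd_choose (hp : p.Prime) :
    NoCarry p a b ↔ ¬ p ∣ (a + b).choose a := by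
  have hlog : Nat.log p (b + a) < a + b + 1 := (Nat.log_le_self p _).trans_lt (by omega)
  rw [add_comm a b, ← emultiplicity_eq_zero, hp.emultiplicity_choose' hlog]
  simp only [Nat.cast_eq_zero, Finset.card_eq_zero, Finset.filter_eq_empty_iff,
    Finset.mem_Ico, not_le]
  refine ⟨fun h i _ => h i, fun h i => ?_⟩
  rcases Nat.eq_zero_or_pos i with rfl | hi
  · simp [Nat.mod_one]
  rcases lt_or_ge i (a + b + 1) with hil | hil
  · exact h ⟨hi, hil⟩
  · have : a + b < p ^ i := by
      have := Nat.lt_pow_self hp.one_lt (n := i); omega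
    have := Nat.mod_le a (p ^ i)
    have := Nat.mod_le b (p ^ i)
    omega

namespace IsNoCarrySum

theorem symm (h : IsNoCarrySum p u v n) : IsNoCarrySum p v u n := by
  obtain ⟨a, ha, b, hb, hab, rfl⟩ := h
  exact ⟨b, hb, a, ha, hab.symm, add_comm b a⟩

theorem mono_left (h : IsNoCarrySum p u v n) (huw : u ≤ w) : IsNoCarrySum p w v n := by
  obtain ⟨a, ha, b, hb, hab, rfl⟩ := h
  exact ⟨a, ha.trans_le huw, b, hb, hab, rfl⟩

theorem of_succ (hp : 1 < p) (h : IsNoCarrySum p u v (n + 1)) : IsNoCarrySum p u v n := by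
  obtain ⟨a, ha, b, hb, hab, hn⟩ := h
  obtain ⟨a', ha', b', hb', hab', rfl⟩ := hab.exists_add_eq hp hn
  exact ⟨a', ha'.trans_lt ha, b', hb'.trans_lt hb, hab', rfl⟩

theorem of_le (hp : 1 < p) {m : ℕ} (h : IsNoCarrySum p u v n) (hmn : m ≤ n) :
    IsNoCarrySum p u v m :=
  antitone_nat_of_succ_le (f := IsNoCarrySum p u v) (fun _ => of_succ hp) hmn h

end IsNoCarrySum

theorem isNoCarrySum_one_left (hp : 0 < p) : IsNoCarrySum p 1 v n ↔ n < v := by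
  constructor
  · rintro ⟨a, ha, b, hb, -, rfl⟩
    omega
  · intro hn
    exact ⟨0, one_pos, n, hn, noCarry_zero_left hp n, zero_add n⟩

theorem wedge_eq_sup (p u v : ℕ) :
    wedge p u v = ((Finset.range u ×ˢ Finset.range v).filter
      (fun ab => ¬ p ∣ Nat.choose (ab.1 + ab.2) ab.1)).sup (fun ab => ab.1 + ab.2 + 1) := by
  unfold wedge
  split_ifs with h
  · rcases h with rfl | rfl <;> simp
  · rfl

theorem lt_wedge_iff (hp : p.Prime) : n < wedge p u v ↔ IsNoCarrySum p u v n := by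
  simp only [wedge_eq_sup, Finset.lt_sup_iff, Finset.mem_filter, Finset.mem_product,
    Finset.mem_range, ← noCarry_iff_not_dvd_choose hp, Prod.exists]
  constructor
  · rintro ⟨a, b, ⟨⟨ha, hb⟩, hab⟩, hn⟩
    exact IsNoCarrySum.of_le hp.one_lt ⟨a, ha, b, hb, hab, rfl⟩ (by omega)
  · rintro ⟨a, ha, b, hb, hab, rfl⟩
    exact ⟨a, b, ⟨⟨ha, hb⟩, hab⟩, by omega⟩

theorem wedge_zero_left (p v : ℕ) : wedge p 0 v = 0 := by simp [wedge]

theorem wedge_zero_right (p u : ℕ) : wedge p u 0 = 0 := by simp [wedge]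

theorem wedge_comm (hp : p.Prime) (u v : ℕ) : wedge p u v = wedge p v u :=
  eq_of_forall_lt_iff fun _ => by
    rw [lt_wedge_iff hp, lt_wedge_iff hp]
    exact ⟨IsNoCarrySum.symm, IsNoCarrySum.symm⟩

theorem wedge_one_left (hp : p.Prime) (v : ℕ) : wedge p 1 v = v :=
  eq_of_forall_lt_iff fun _ => by rw [lt_wedge_iff hp, isNoCarrySum_one_left hp.pos]

theorem wedge_mono_left (hp : p.Prime) (v : ℕ) : Monotone (wedge p · v) := fun _ _ huw =>
  le_of_forall_lt fun _ => by
    simp only [lt_wedge_iff hp]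
    exact fun h => h.mono_left huw

theorem isNoCarrySum_wedge_left_iff (hp : p.Prime) :
    IsNoCarrySum p (wedge p u v) w n ↔ ∃ a < u, ∃ b < v, ∃ c < w,
      (NoCarry p a b ∧ NoCarry p (a + b) c) ∧ a + b + c = n := by
  constructor
  · rintro ⟨d, hd, c, hc, hdc, rfl⟩
    obtain ⟨a, ha, b, hb, hab, rfl⟩ := (lt_wedge_iff hp).1 hd
    exact ⟨a, ha, b, hb, c, hc, ⟨hab, hdc⟩, rfl⟩
  · rintro ⟨a, ha, b, hb, c, hc, ⟨hab, habc⟩, rfl⟩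
    exact ⟨a + b, (lt_wedge_iff hp).2 ⟨a, ha, b, hb, hab, rfl⟩, c, hc, habc, rfl⟩

theorem isNoCarrySum_wedge_right_iff (hp : p.Prime) :
    IsNoCarrySum p u (wedge p v w) n ↔ ∃ a < u, ∃ b < v, ∃ c < w,
      (NoCarry p b c ∧ NoCarry p a (b + c)) ∧ a + b + c = n := by
  constructor
  · rintro ⟨a, ha, d, hd, had, rfl⟩
    obtain ⟨b, hb, c, hc, hbc, rfl⟩ := (lt_wedge_iff hp).1 hd
    exact ⟨a, ha, b, hb, c, hc, ⟨hbc, had⟩, add_assoc a b c⟩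
  · rintro ⟨a, ha, b, hb, c, hc, ⟨hbc, habc⟩, rfl⟩
    exact ⟨a, ha, b + c, (lt_wedge_iff hp).2 ⟨b, hb, c, hc, hbc, rfl⟩, habc,
      (add_assoc a b c).symm⟩

theorem wedge_assoc (hp : p.Prime) (u v w : ℕ) :
    wedge p (wedge p u v) w = wedge p u (wedge p v w) :=
  eq_of_forall_lt_iff fun _ => by
    simp only [lt_wedge_iff hp, isNoCarrySum_wedge_left_iff hp,
      isNoCarrySum_wedge_right_iff hp, noCarry_assoc]

/-- `ℕ` with addition `max` and multiplication `wedge p` is a commutative semiring. -/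
theorem stmt_12 (p : ℕ) (hp : p.Prime) :
    (∀ u v : ℕ, max u v = max v u) ∧
    (∀ u v w : ℕ, max (max u v) w = max u (max v w)) ∧
    (∀ u : ℕ, max 0 u = u) ∧
    (∀ u v : ℕ, wedge p u v = wedge p v u) ∧
    (∀ u v w : ℕ, wedge p (wedge p u v) w = wedge p u (wedge p v w)) ∧
    (∀ u : ℕ, wedge p 1 u = u) ∧
    (∀ u : ℕ, wedge p u 1 = u) ∧
    (∀ u : ℕ, wedge p 0 u = 0) ∧
    (∀ u : ℕ, wedge p u 0 = 0) ∧
    (∀ u v w : ℕ, wedge p (max u v) w = max (wedge p u w) (wedge p v w)) ∧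
    (∀ u v w : ℕ, wedge p u (max v w) = max (wedge p u v) (wedge p u w)) := by
  have distrib_right (u v w : ℕ) : wedge p (max u v) w = max (wedge p u w) (wedge p v w) :=
    (wedge_mono_left hp w).map_max
  refine ⟨max_comm, max_assoc, fun u => max_eq_right u.zero_le, wedge_comm hp, wedge_assoc hp,
    wedge_one_left hp, fun u => (wedge_comm hp u 1).trans (wedge_one_left hp u),
    wedge_zero_left p, wedge_zero_right p, distrib_right, fun u v w => ?_⟩
  simp only [wedge_comm hp u, distrib_right]
end

section
/- Let $p$ be a prime, $i, j$ positive integers, and let $d = i \wedge j = \max\{a+b+1 : 0 \leq a \leq i-1,\ 0 \leq b \leq j-1,\ p \nmid \binom{a+b}{a}\}$. Then $d$ is the unique integer such that: $\binom{d-1}{i-1} \not\equiv 0 \pmod p$ with $d - 1 \leq (i-1)+(j-1)$, $d-1 \geq j-1$ (assuming $i \leq j$), and $\binom{m}{e} \equiv 0 \pmod p$ for all $m$ with $d \leq m \leq i+j-2$ and all $e \leq i-1$ with $m - e \leq j - 1$. -/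
private lemma not_dvd_choose_small {p n k : ℕ} (hp : p.Prime) (hn : n < p) (hk : k ≤ n) :
    ¬ p ∣ n.choose k := by
  intro h
  have h3 := Nat.choose_mul_factorial_mul_factorial hk
  have h2 : p ∣ Nat.factorial n :=
    h3 ▸ ((h.mul_right (Nat.factorial k)).mul_right (Nat.factorial (n - k)))
  have := (Nat.Prime.dvd_factorial hp).mp h2
  omega

/-- One step of Lucas: carry-free recursion for `p ∤ choose (a+b) a`. -/
private lemma cf_step {p : ℕ} (hp : p.Prime) (a b : ℕ) :
    ¬ p ∣ Nat.choose (a + b) a ↔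
      a % p + b % p < p ∧ ¬ p ∣ Nat.choose (a / p + b / p) (a / p) := by
  haveI : Fact p.Prime := ⟨hp⟩
  have hp0 : 0 < p := hp.pos
  have hmod := Choose.choose_modEq_choose_mod_mul_choose_div_nat (p := p) (n := a + b) (k := a)
  have hiff : p ∣ (a + b).choose a ↔
      p ∣ ((a + b) % p).choose (a % p) * ((a + b) / p).choose (a / p) := by
    constructor <;> intro h
    · exact Nat.modEq_zero_iff_dvd.mp (hmod.symm.trans (Nat.modEq_zero_iff_dvd.mpr h))
    · exact Nat.modEq_zero_iff_dvd.mp (hmod.trans (Nat.modEq_zero_iff_dvd.mpr h))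
  rw [hiff, hp.dvd_mul]
  have hma : a % p < p := Nat.mod_lt _ hp0
  have hmb : b % p < p := Nat.mod_lt _ hp0
  by_cases hlt : a % p + b % p < p
  · have h1 : (a + b) % p = a % p + b % p := Nat.add_mod_of_add_mod_lt hlt
    have h2 : (a + b) / p = a / p + b / p := by
      rw [Nat.add_div hp0, if_neg (by omega)]
      omega
    rw [h1, h2]
    have h3 : ¬ p ∣ (a % p + b % p).choose (a % p) :=
      not_dvd_choose_small hp hlt (Nat.le_add_right _ _)
    tauto
  · have h1 : (a + b) % p + p = a % p + b % p := Nat.add_mod_add_of_le_add_mod (by omega)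
    have h2 : p ∣ ((a + b) % p).choose (a % p) := by
      rw [Nat.choose_eq_zero_of_lt (by omega)]
      exact dvd_zero p
    tauto

/-- Build carry-freeness from digit data. -/
private lemma cf_build {p : ℕ} (hp : p.Prime) {u c' c₀ : ℕ} (h0 : u % p + c₀ < p)
    (hcf : ¬ p ∣ Nat.choose (u / p + c') (u / p)) :
    ¬ p ∣ Nat.choose (u + (p * c' + c₀)) u := by
  have hp0 : 0 < p := hp.pos
  have hc0 : c₀ < p := by omega
  rw [cf_step hp]
  have h1 : (p * c' + c₀) % p = c₀ := by
    rw [Nat.mul_comm p c']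
    exact Nat.mul_add_mod_of_lt hc0
  have h2 : (p * c' + c₀) / p = c' := by
    rw [Nat.mul_add_div hp0, Nat.div_eq_of_lt hc0, Nat.add_zero]
  rw [h1, h2]
  exact ⟨h0, hcf⟩

/-- Key lemma: a carry-free pair `(a, b)` with `a ≤ u` can be transformed into a carry-free
pair `(u, c)` with `c ≤ b` and `b ≤ c + (u - a)`. -/
private lemma exists_partner {p : ℕ} (hp : p.Prime) :
    ∀ u a b : ℕ, a ≤ u → ¬ p ∣ Nat.choose (a + b) a →
      ∃ c, c ≤ b ∧ b ≤ c + (u - a) ∧ ¬ p ∣ Nat.choose (u + c) u := by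
  intro u
  induction u using Nat.strong_induction_on with
  | _ u ih =>
    intro a b hau hcf
    have hp0 : 0 < p := hp.pos
    have hp2 : 2 ≤ p := hp.two_le
    rw [cf_step hp] at hcf
    obtain ⟨hlow, hcf'⟩ := hcf
    have hdiv : a / p ≤ u / p := Nat.div_le_div_right hau
    obtain ⟨a1, a0, haa, ha0, had, ham⟩ :
        ∃ x y, a = p * x + y ∧ y < p ∧ a / p = x ∧ a % p = y :=
      ⟨a / p, a % p, (Nat.div_add_mod a p).symm, Nat.mod_lt _ hp0, rfl, rfl⟩
    obtain ⟨b1, b0, hbb, hb0, hbd, hbm⟩ :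
        ∃ x y, b = p * x + y ∧ y < p ∧ b / p = x ∧ b % p = y :=
      ⟨b / p, b % p, (Nat.div_add_mod b p).symm, Nat.mod_lt _ hp0, rfl, rfl⟩
    obtain ⟨u1, u0, huu, hu0, hud, hum⟩ :
        ∃ x y, u = p * x + y ∧ y < p ∧ u / p = x ∧ u % p = y :=
      ⟨u / p, u % p, (Nat.div_add_mod u p).symm, Nat.mod_lt _ hp0, rfl, rfl⟩
    rw [ham, hbm] at hlow
    rw [had, hbd] at hcf'
    rw [had, hud] at hdiv
    rcases eq_or_lt_of_le hdiv with heq | hlt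
    · -- same high part
      subst heq
      have hmau : a0 ≤ u0 := by omega
      by_cases hch : u0 + b0 < p
      · refine ⟨b, le_refl _, by omega, ?_⟩
        rw [hbb]
        refine cf_build hp (by omega) ?_
        rw [hud]
        exact hcf'
      · refine ⟨p * b1 + (p - 1 - u0), by omega, by omega, ?_⟩
        refine cf_build hp (by omega) ?_
        rw [hud]
        exact hcf'
    · -- strictly smaller high part
      have hmul : p * a1 + p ≤ p * u1 := by
        have := Nat.mul_le_mul_left p hlt
        rw [Nat.mul_succ] at this
        omega
      have hu0pos : 0 < u := by omega
      have hult : u / p < u := Nat.div_lt_self hu0pos hp.one_lt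
      rw [hud] at hult
      obtain ⟨c', hc'b, hbc', hcfc'⟩ := ih u1 hult a1 b1 (le_of_lt hlt) hcf'
      rcases eq_or_lt_of_le hc'b with hcb | hlt'
      · by_cases hch : u0 + b0 < p
        · refine ⟨b, le_refl _, by omega, ?_⟩
          rw [hbb]
          refine cf_build hp (by omega) ?_
          rw [hud]
          exact hcb ▸ hcfc'
        · refine ⟨p * b1 + (p - 1 - u0), by omega, by omega, ?_⟩
          refine cf_build hp (by omega) ?_
          rw [hud]
          exact hcb ▸ hcfc'
      · have hmul2 : p * c' + p ≤ p * b1 := by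
          have := Nat.mul_le_mul_left p hlt'
          rw [Nat.mul_succ] at this
          omega
        have hmul3 : p * b1 + p * a1 ≤ p * c' + p * u1 := by
          have h4 : b1 + a1 ≤ c' + u1 := by omega
          have := Nat.mul_le_mul_left p h4
          rw [Nat.mul_add, Nat.mul_add] at this
          exact this
        refine ⟨p * c' + (p - 1 - u0), by omega, by omega, ?_⟩
        refine cf_build hp (by omega) ?_
        rw [hud]
        exact hcfc'

theorem stmt_14 (p : ℕ) (hp : p.Prime) (i j : ℕ) (hi : 1 ≤ i) (hij : i ≤ j) :
    (¬ p ∣ Nat.choose (wedge p i j - 1) (i - 1) ∧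
      j - 1 ≤ wedge p i j - 1 ∧ wedge p i j - 1 ≤ (i - 1) + (j - 1) ∧
      (∀ m e : ℕ, wedge p i j ≤ m → m ≤ i + j - 2 → e ≤ i - 1 → m - e ≤ j - 1 →
        p ∣ Nat.choose m e)) ∧
    (∀ d : ℕ, 1 ≤ d →
      (¬ p ∣ Nat.choose (d - 1) (i - 1) ∧
        j - 1 ≤ d - 1 ∧ d - 1 ≤ (i - 1) + (j - 1) ∧
        (∀ m e : ℕ, d ≤ m → m ≤ i + j - 2 → e ≤ i - 1 → m - e ≤ j - 1 →
          p ∣ Nat.choose m e)) → d = wedge p i j) := by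
  have hj : 1 ≤ j := le_trans hi hij
  set u := i - 1 with hu
  set v := j - 1 with hv
  set S := (Finset.range (v + 1)).filter (fun b => ¬ p ∣ Nat.choose (u + b) u) with hSdef
  have hS0 : 0 ∈ S := by
    simp only [hSdef, Finset.mem_filter, Finset.mem_range, Nat.add_zero, Nat.choose_self]
    exact ⟨by omega, hp.prime.not_dvd_one⟩
  set B := S.max' ⟨0, hS0⟩ with hBdef
  have hBmem : B ∈ S := S.max'_mem ⟨0, hS0⟩
  have hBv : B ≤ v := by
    have := (Finset.mem_filter.mp hBmem).1
    simpa [Finset.mem_range, Nat.lt_succ_iff] using this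
  have hBcf : ¬ p ∣ Nat.choose (u + B) u := (Finset.mem_filter.mp hBmem).2
  have hbound : ∀ a b : ℕ, a ≤ u → b ≤ v → ¬ p ∣ Nat.choose (a + b) a → a + b ≤ u + B := by
    intro a b ha hb hcf
    obtain ⟨c, hcb, hbc, hcf2⟩ := exists_partner hp u a b ha hcf
    have hcS : c ∈ S := by
      simp only [hSdef, Finset.mem_filter, Finset.mem_range, Nat.lt_succ_iff]
      exact ⟨le_trans hcb hb, hcf2⟩
    have := S.le_max' c hcS
    omega
  have h2 : v ≤ u + B := by
    have hcf0 : ¬ p ∣ Nat.choose (0 + v) 0 := by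
      rw [Nat.zero_add, Nat.choose_zero_right]
      exact hp.prime.not_dvd_one
    obtain ⟨c, hcb, hbc, hcf2⟩ := exists_partner hp u 0 v (Nat.zero_le u) hcf0
    have hcS : c ∈ S := by
      simp only [hSdef, Finset.mem_filter, Finset.mem_range, Nat.lt_succ_iff]
      exact ⟨hcb, hcf2⟩
    have := S.le_max' c hcS
    omega
  have hW : wedge p i j = u + B + 1 := by
    rw [wedge, if_neg (by omega)]
    apply le_antisymm
    · apply Finset.sup_le
      intro ab hab
      obtain ⟨hmem, hcf2⟩ := Finset.mem_filter.mp hab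
      obtain ⟨h1, h2'⟩ := Finset.mem_product.mp hmem
      rw [Finset.mem_range] at h1 h2'
      have := hbound ab.1 ab.2 (by omega) (by omega) hcf2
      omega
    · have hmem : (u, B) ∈ (Finset.range i ×ˢ Finset.range j).filter
          (fun ab => ¬ p ∣ Nat.choose (ab.1 + ab.2) ab.1) := by
        simp only [Finset.mem_filter, Finset.mem_product, Finset.mem_range]
        exact ⟨⟨by omega, by omega⟩, hBcf⟩
      exact Finset.le_sup (f := fun ab : ℕ × ℕ => ab.1 + ab.2 + 1) hmem
  have hcond4 : ∀ m e : ℕ, u + B + 1 ≤ m → m ≤ i + j - 2 → e ≤ i - 1 → m - e ≤ j - 1 →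
      p ∣ Nat.choose m e := by
    intro m e hm hm2 he hme
    rcases Nat.lt_or_ge m e with hlt | hge
    · rw [Nat.choose_eq_zero_of_lt hlt]
      exact dvd_zero p
    · by_contra hcf2
      have hme' : e + (m - e) = m := by omega
      have := hbound e (m - e) he hme (by rw [hme']; exact hcf2)
      omega
  constructor
  · rw [hW]
    refine ⟨by simpa using hBcf, by omega, by omega, ?_⟩
    intro m e hm
    exact hcond4 m e (by omega)
  · rintro d hd ⟨hd1, hd2, hd3, hd4⟩
    have hiu : u ≤ d - 1 := by
      by_contra hcon
      rw [Nat.choose_eq_zero_of_lt (by omega)] at hd1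
      exact hd1 (dvd_zero p)
    have hdle : d ≤ u + B + 1 := by
      have hsplit : u + (d - 1 - u) = d - 1 := by omega
      have hcf2 : ¬ p ∣ Nat.choose (u + (d - 1 - u)) u := by rw [hsplit]; exact hd1
      have := hbound u (d - 1 - u) (le_refl u) (by omega) hcf2
      omega
    have hdge : u + B + 1 ≤ d := by
      by_contra hcon
      exact hBcf (hd4 (u + B) u (by omega) (by omega) (by omega) (by omega))
    omega
end
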